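/- arXiv:0804.1379 — 3 statements merged into one kernel-verified Lean document; each statement's English description precedes it below -/
import Mathlib

section
/- For general parameters p, q with p + q = 1, pq ≠ 0, and distinct complex numbers ξ_1,…,ξ_k with p + qξ_iξ_j - ξ_i ≠ 0 and (1-ξ_i)(qξ_i-p) ≠ 0 for all i,j: det(1/(p + qξ_iξ_j - ξ_i))_{1≤i,j≤k} = (-1)^k (pq)^{k(k-1)/2} ∏_{i≠j} (ξ_j - ξ_i)/(p + qξ_iξ_j - ξ_i) · ∏_i 1/((1-ξ_i)(qξ_i - p)). -/
open Finset

open Matrix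

theorem my_det_col_op {n : Type*} [DecidableEq n] [Fintype n] {A B : Matrix n n ℂ} (c : n → ℂ)
    (k : n) (hk : c k = 0) (A_eq : ∀ i j, A i j = B i j + c j * B i k) : det A = det B := by
  rw [← Matrix.det_transpose A, ← Matrix.det_transpose B]
  exact Matrix.det_eq_of_forall_row_eq_smul_add_const c k hk fun i j => A_eq j i

theorem my_det_cauchy {n : ℕ} (a b y : Fin n → ℂ) (h : ∀ i j, a i + b i * y j ≠ 0) :
    Matrix.det (fun i j => (a i + b i * y j)⁻¹) =
      (∏ i : Fin n, ∏ j ∈ Ioi i, ((a j * b i - a i * b j) * (y j - y i))) *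
        ∏ i : Fin n, ∏ j : Fin n, (a i + b i * y j)⁻¹ := by
  induction n with
  | zero => exact Matrix.det_fin_zero.trans (by simp)
  | succ n ih =>
    calc
      Matrix.det (fun i j => (a i + b i * y j)⁻¹)
          = Matrix.det (fun i j : Fin (n+1) =>
              if j = 0 then (a i + b i * y 0)⁻¹
              else (a i + b i * y j)⁻¹ - (a i + b i * y 0)⁻¹) := by
        refine my_det_col_op (fun j => if j = 0 then 0 else 1) 0 (by simp) fun i j => ?_
        by_cases hj : j = 0 <;> simp [hj]
      _ = Matrix.det (Matrix.of fun i j : Fin (n+1) =>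
            (a i + b i * y 0)⁻¹ *
              (if j = 0 then 1 else b i * (y 0 - y j) * (a i + b i * y j)⁻¹)) := by
        congr 1
        funext i j
        by_cases hj : j = 0
        · simp [hj]
        · simp only [hj, if_false, Matrix.of_apply]
          field_simp [h i j, h i 0]
          try ring
      _ = (∏ i : Fin (n+1), (a i + b i * y 0)⁻¹) * Matrix.det (fun i j : Fin (n+1) =>
            if j = 0 then 1 else b i * (y 0 - y j) * (a i + b i * y j)⁻¹) := by
        refine (Matrix.det_mul_column _ _).trans ?_
        try rfl
      _ = (∏ i : Fin (n+1), (a i + b i * y 0)⁻¹) * ((∏ j : Fin n, (y 0 - y j.succ)) *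
          Matrix.det (fun i j : Fin (n+1) => if j = 0 then 1 else b i * (a i + b i * y j)⁻¹)) := by
        congr 1
        rw [show (fun i j : Fin (n+1) =>
              if j = 0 then 1 else b i * (y 0 - y j) * (a i + b i * y j)⁻¹)
            = Matrix.of fun i j : Fin (n+1) => (if j = 0 then 1 else (y 0 - y j)) *
              (if j = 0 then 1 else b i * (a i + b i * y j)⁻¹) by
          funext i j; by_cases hj : j = 0 <;> simp [hj] <;> ring]
        refine (Matrix.det_mul_row _ _).trans ?_
        congr 1
        rw [Fin.prod_univ_succ]
        simp [Fin.succ_ne_zero]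
      _ = (∏ i : Fin (n+1), (a i + b i * y 0)⁻¹) * ((∏ j : Fin n, (y 0 - y j.succ)) *
          Matrix.det (fun i j : Fin (n+1) =>
            if i = 0 then (if j = 0 then 1 else b 0 * (a 0 + b 0 * y j)⁻¹)
            else (if j = 0 then 0
              else (a 0 * b i - a i * b 0) * ((a i + b i * y j)⁻¹ * (a 0 + b 0 * y j)⁻¹)))) := by
        congr 2
        refine Matrix.det_eq_of_forall_row_eq_smul_add_const
          (fun i => if i = 0 then 0 else 1) 0 (by simp) fun i j => ?_
        by_cases hi : i = 0
        · simp [hi]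
        · by_cases hj : j = 0
          · simp [hi, hj]
          · simp only [hi, hj, if_false, if_true, eq_self_iff_true, one_mul]
            field_simp [h i j, h 0 j]
            try ring
            linear_combination (-(b i)) * mul_inv_cancel₀ (h 0 j)
      _ = (∏ i : Fin (n+1), (a i + b i * y 0)⁻¹) * ((∏ j : Fin n, (y 0 - y j.succ)) *
          Matrix.det (fun i j : Fin n =>
            (a 0 * b i.succ - a i.succ * b 0) *
              ((a i.succ + b i.succ * y j.succ)⁻¹ * (a 0 + b 0 * y j.succ)⁻¹))) := by
        congr 2
        refine (Matrix.det_succ_column_zero _).trans ?_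
        rw [Fin.sum_univ_succ]
        simp only [Fin.val_zero, pow_zero, one_mul, Fin.val_succ, if_true, eq_self_iff_true,
          Fin.succ_ne_zero, if_false, mul_zero, zero_mul, Finset.sum_const_zero, add_zero,
          if_pos rfl]
        refine congr_arg Matrix.det (funext fun i => funext fun j => ?_)
        simp [Matrix.submatrix_apply, Fin.succ_ne_zero, Fin.succAbove_zero]
        simp [Matrix.submatrix, Fin.succ_ne_zero]
      _ = (∏ i : Fin (n+1), (a i + b i * y 0)⁻¹) * ((∏ j : Fin n, (y 0 - y j.succ)) *
          ((∏ i : Fin n, (a 0 * b i.succ - a i.succ * b 0)) *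
            ((∏ j : Fin n, (a 0 + b 0 * y j.succ)⁻¹) *
          Matrix.det (fun i j : Fin n => (a i.succ + b i.succ * y j.succ)⁻¹)))) := by
        congr 2
        rw [show (fun i j : Fin n =>
            (a 0 * b i.succ - a i.succ * b 0) *
              ((a i.succ + b i.succ * y j.succ)⁻¹ * (a 0 + b 0 * y j.succ)⁻¹))
          = Matrix.of fun i j : Fin n => (a 0 * b i.succ - a i.succ * b 0) *
            ((a 0 + b 0 * y j.succ)⁻¹ * (a i.succ + b i.succ * y j.succ)⁻¹) by
          funext i j; simp only [Matrix.of_apply]; ring]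
        refine (Matrix.det_mul_column _ _).trans ?_
        congr 1
        have := Matrix.det_mul_row (fun j => (a 0 + b 0 * y j.succ)⁻¹)
          (Matrix.of fun i j : Fin n => (a i.succ + b i.succ * y j.succ)⁻¹)
        simp only [Matrix.det_apply, Matrix.of_apply] at this ⊢
        exact Matrix.det_mul_row _ _
      _ = (∏ i : Fin (n+1), ∏ j ∈ Ioi i, ((a j * b i - a i * b j) * (y j - y i))) *
            ∏ i : Fin (n+1), ∏ j : Fin (n+1), (a i + b i * y j)⁻¹ := by
        rw [ih (fun i => a i.succ) (fun i => b i.succ) (fun i => y i.succ)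
          (fun i j => h i.succ j.succ)]
        rw [Fin.prod_univ_succ
          (f := fun i => ∏ j ∈ Ioi i, ((a j * b i - a i * b j) * (y j - y i))),
          Fin.prod_Ioi_zero]
        simp_rw [Fin.prod_Ioi_succ]
        rw [Fin.prod_univ_succ (f := fun i => ∏ j : Fin (n+1), (a i + b i * y j)⁻¹),
          Fin.prod_univ_succ (f := fun j => (a 0 + b 0 * y j)⁻¹),
          Fin.prod_univ_succ (f := fun i => (a i + b i * y 0)⁻¹)]
        have hsplit : (∏ i : Fin n, ∏ j : Fin (n+1), (a i.succ + b i.succ * y j)⁻¹)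
            = (∏ i : Fin n, (a i.succ + b i.succ * y 0)⁻¹) *
              ∏ i : Fin n, ∏ j : Fin n, (a i.succ + b i.succ * y j.succ)⁻¹ := by
          rw [← Finset.prod_mul_distrib]
          exact Finset.prod_congr rfl fun i _ => Fin.prod_univ_succ _
        have hF : (∏ j : Fin n, ((a j.succ * b 0 - a 0 * b j.succ) * (y j.succ - y 0)))
            = (∏ j : Fin n, (y 0 - y j.succ)) *
              ∏ j : Fin n, (a 0 * b j.succ - a j.succ * b 0) := by
          rw [← Finset.prod_mul_distrib]
          exact Finset.prod_congr rfl fun j _ => by ring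
        rw [hsplit, hF]
        ring

set_option maxRecDepth 8000 in
theorem stmt0 (k : ℕ) (p q : ℂ) (hpq : p + q = 1) (hp : p ≠ 0) (hq : q ≠ 0)
    (ξ : Fin k → ℂ) (hξ : Function.Injective ξ)
    (hden : ∀ i j : Fin k, p + q * ξ i * ξ j - ξ i ≠ 0)
    (hden' : ∀ i : Fin k, (1 - ξ i) * (q * ξ i - p) ≠ 0) :
    Matrix.det (fun i j : Fin k => (p + q * ξ i * ξ j - ξ i)⁻¹) =
      (-1) ^ k * (p * q) ^ (k * (k - 1) / 2) *
        (∏ i : Fin k, ∏ j ∈ Finset.univ.erase i,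
          (ξ j - ξ i) / (p + q * ξ i * ξ j - ξ i)) *
        ∏ i : Fin k, ((1 - ξ i) * (q * ξ i - p))⁻¹ := by
  have key : ∀ i j : Fin k, (p - ξ i) + (q * ξ i) * ξ j ≠ 0 := fun i j hc =>
    hden i j (by linear_combination hc)
  have hN : (∑ i : Fin k, #(Ioi i)) = k * (k - 1) / 2 := by
    simp_rw [Fin.card_Ioi]
    rw [Fin.sum_univ_eq_sum_range (fun i => k - 1 - i) k]
    rw [show (∑ i ∈ range k, (k - 1 - i)) = ∑ i ∈ range k, i from
      Finset.sum_range_reflect (fun i => i) k]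
    exact Finset.sum_range_id k
  have hconst : ∀ c : ℂ, (∏ i : Fin k, ∏ _j ∈ Ioi i, c) = c ^ (k * (k - 1) / 2) := by
    intro c
    simp_rw [Finset.prod_const]
    rw [Finset.prod_pow_eq_pow_sum, hN]
  have hsplitpairs : ∀ f : Fin k → Fin k → ℂ,
      (∏ i, ∏ j ∈ Ioi i, (f i j * f j i)) = ∏ i, ∏ j ∈ Finset.univ.erase i, f i j := by
    intro f
    have h0 := Finset.prod_prod_Ioi_mul_eq_prod_prod_off_diag (fun x y => f y x)
    simp only [Finset.compl_singleton] at h0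
    rw [h0]
  have hgrid : ∀ f : Fin k → Fin k → ℂ,
      (∏ i, ∏ j, f i j) = (∏ i, f i i) * ∏ i, ∏ j ∈ Finset.univ.erase i, f i j := by
    intro f
    rw [← Finset.prod_mul_distrib]
    exact Finset.prod_congr rfl fun i _ => (Finset.mul_prod_erase univ (f i) (mem_univ i)).symm
  -- rewrite the LHS using the Cauchy determinant
  have hmat : (fun i j : Fin k => (p + q * ξ i * ξ j - ξ i)⁻¹)
      = fun i j => ((p - ξ i) + (q * ξ i) * ξ j)⁻¹ := by
    funext i j; congr 1; ring
  rw [hmat, my_det_cauchy _ _ _ key]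
  have e1 : ∀ i j : Fin k, ((p - ξ j) * (q * ξ i) - (p - ξ i) * (q * ξ j)) * (ξ j - ξ i)
      = -(p * q) * (ξ j - ξ i) ^ 2 := fun i j => by ring
  have e2 : ∀ i j : Fin k, ((p - ξ i) + (q * ξ i) * ξ j)⁻¹
      = (p + q * ξ i * ξ j - ξ i)⁻¹ := fun i j => by congr 1; ring
  simp_rw [e1, e2]
  -- split the constant out of the pair product on the left
  simp_rw [Finset.prod_mul_distrib]
  rw [hconst (-(p * q))]
  -- split the grid product on the left into diagonal and off-diagonal parts
  rw [hgrid (fun i j => (p + q * ξ i * ξ j - ξ i)⁻¹),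
    ← hsplitpairs (fun i j => (p + q * ξ i * ξ j - ξ i)⁻¹)]
  -- handle the right-hand side
  simp_rw [div_eq_mul_inv]
  rw [← hsplitpairs (fun i j => (ξ j - ξ i) * (p + q * ξ i * ξ j - ξ i)⁻¹)]
  have e3 : ∀ i j : Fin k, (ξ j - ξ i) * (p + q * ξ i * ξ j - ξ i)⁻¹ *
        ((ξ i - ξ j) * (p + q * ξ j * ξ i - ξ j)⁻¹)
      = -1 * ((ξ j - ξ i) ^ 2 * ((p + q * ξ i * ξ j - ξ i)⁻¹ * (p + q * ξ j * ξ i - ξ j)⁻¹)) :=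
    fun i j => by ring
  simp_rw [e3]
  simp_rw [Finset.prod_mul_distrib]
  rw [hconst (-1)]
  have e4 : ∀ i : Fin k, ((1 - ξ i) * (q * ξ i - p))⁻¹ = -(p + q * ξ i * ξ i - ξ i)⁻¹ := by
    intro i
    have h1 : (1 - ξ i) * (q * ξ i - p) = -(p + q * ξ i * ξ i - ξ i) := by
      linear_combination (ξ i) * hpq
    rw [h1, inv_neg]
  have e5 : (∏ i : Fin k, (-(p + q * ξ i * ξ i - ξ i)⁻¹)) =
      (-1 : ℂ) ^ k * ∏ i : Fin k, (p + q * ξ i * ξ i - ξ i)⁻¹ := by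
    rw [show (-1 : ℂ) ^ k = ∏ _i : Fin k, (-1 : ℂ) by
      rw [Finset.prod_const, card_univ, Fintype.card_fin], ← Finset.prod_mul_distrib]
    exact Finset.prod_congr rfl fun i _ => by ring
  simp_rw [e4]
  rw [e5]
  have hneg : (-(p * q)) ^ (k * (k - 1) / 2)
      = (-1 : ℂ) ^ (k * (k - 1) / 2) * (p * q) ^ (k * (k - 1) / 2) := by
    rw [← neg_one_mul, mul_pow]
  rw [hneg]
  have hk1 : ((-1 : ℂ)) ^ k * ((-1 : ℂ)) ^ k = 1 := by
    rw [← pow_add, ← two_mul, pow_mul]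
    norm_num
  ring_nf
  rw [show ((-1 : ℂ)) ^ (k * 2) = 1 by rw [pow_mul']; norm_num]
  rw [show (∏ x : Fin k, ∏ x_1 ∈ Finset.Ioi x, (-(ξ x_1 * ξ x * 2) + ξ x_1 ^ 2 + ξ x ^ 2))
      = ∏ x : Fin k, ∏ x_1 ∈ Finset.Ioi x, (ξ x_1 - ξ x) ^ 2 from
    Finset.prod_congr rfl fun x _ => Finset.prod_congr rfl fun y _ => by ring]
  ring
end

section
/- Let 0 < p < q with p + q = 1 and let K_0 be the integral operator on L²(ℝ) with kernel K_0(z,z') = (1/√(2π)) exp(-(p²+q²)(z² + z'²)/4 + pq z z'). Then for every integer i ≥ 0, the function φ_i(z) = exp(-(q²-p²)z²/4) H_i(√((q²-p²)/2) z), where H_i is the i-th Hermite polynomial, is an eigenfunction of K_0 with eigenvalue τ^i/q, i.e. ∫_ℝ K_0(z,z') φ_i(z') dz' = (τ^i/q) φ_i(z), where τ = p/q. -/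
open Polynomial MeasureTheory

/-- The physicists' Hermite polynomials: H₀ = 1, H₁ = 2X,
    H_{n+2} = 2X·H_{n+1} - 2(n+1)·H_n. -/
noncomputable def hermiteP : ℕ → Polynomial ℝ
  | 0 => 1
  | 1 => C 2 * X
  | (n + 2) => C 2 * X * hermiteP (n + 1) - C ((2 : ℝ) * (n + 1)) * hermiteP n

/-!
Completing the square turns the kernel times `exp(-(q² - p²) z'²/4)` into
`exp(-(q² - p²) z²/4) · exp(-(a z' - b)²)` with `a = q/√2`, `b = pz/√2`, and the substitution
`u = a z' - b` reduces the eigenvalue equation to the Gaussian smoothing identity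
`∫ exp(-u²) Hₙ(αu + c) du = √π βⁿ Hₙ(c/β)` for `α² + β² = 1` (here `β = p/q`).
Both sides of that identity obey the three-term Hermite recurrence in `n`: on the left by Gaussian
integration by parts, `∫ u exp(-u²) P(u) du = ½ ∫ exp(-u²) P'(u) du`, and `Hₙ₊₁' = 2(n+1) Hₙ`;
on the right because `α² - 1 = -β²`.
-/

open Real

lemma hermiteP_zero : hermiteP 0 = 1 := by rw [hermiteP]

lemma hermiteP_one : hermiteP 1 = C 2 * X := by rw [hermiteP]

lemma hermiteP_add_two (n : ℕ) :
    hermiteP (n + 2) = C 2 * X * hermiteP (n + 1) - C ((2 : ℝ) * (n + 1)) * hermiteP n := by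
  rw [hermiteP]

lemma derivative_hermiteP_succ (n : ℕ) :
    derivative (hermiteP (n + 1)) = C (2 * (n + 1) : ℝ) * hermiteP n := by
  induction n using Nat.twoStepInduction with
  | zero => simp [hermiteP_one, hermiteP_zero]
  | one =>
    rw [hermiteP_add_two, hermiteP_one, hermiteP_zero]
    simp only [derivative_sub, derivative_mul, derivative_C, derivative_X, derivative_one]
    simp only [map_mul, map_ofNat, map_add, map_one, Nat.cast_one]
    ring
  | more n ih₀ ih₁ =>
    rw [hermiteP_add_two, derivative_sub, mul_assoc, derivative_C_mul, derivative_C_mul,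
      derivative_mul, derivative_X, ih₁, hermiteP_add_two, ih₀]
    simp only [map_mul, map_add, map_ofNat, map_natCast, map_one]
    push_cast
    ring

lemma integrable_exp_neg_sq_mul_eval (P : ℝ[X]) :
    Integrable fun x : ℝ => exp (-x ^ 2) * P.eval x := by
  induction P using Polynomial.induction_on' with
  | add P Q hP hQ =>
    exact (hP.add hQ).congr (.of_forall fun x => by simp only [Pi.add_apply, eval_add, mul_add])
  | monomial k a =>
    have hk := integrable_rpow_mul_exp_neg_mul_sq one_pos
      (neg_one_lt_zero.trans_le (Nat.cast_nonneg k))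
    simp only [rpow_natCast, neg_mul, one_mul] at hk
    refine (hk.const_mul a).congr (Filter.Eventually.of_forall fun x => ?_)
    simp only [eval_monomial]
    ring

noncomputable def gaussIntegral : ℝ[X] →ₗ[ℝ] ℝ where
  toFun P := ∫ x, exp (-x ^ 2) * P.eval x
  map_add' P Q := by
    simp only [eval_add, mul_add]
    exact integral_add (integrable_exp_neg_sq_mul_eval P) (integrable_exp_neg_sq_mul_eval Q)
  map_smul' a P := by
    simp only [eval_smul, smul_eq_mul, RingHom.id_apply, mul_left_comm _ a]
    exact integral_const_mul a _

lemma gaussIntegral_apply (P : ℝ[X]) :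
    gaussIntegral P = ∫ x, exp (-x ^ 2) * P.eval x := rfl

lemma gaussIntegral_C_mul (a : ℝ) (P : ℝ[X]) : gaussIntegral (C a * P) = a * gaussIntegral P := by
  rw [← smul_eq_C_mul, map_smul, smul_eq_mul]

lemma gaussIntegral_one : gaussIntegral 1 = √π := by
  simpa [gaussIntegral_apply] using integral_gaussian 1

lemma gaussIntegral_X_mul (P : ℝ[X]) :
    gaussIntegral (X * P) = gaussIntegral (derivative P) / 2 := by
  have hv (x : ℝ) : HasDerivAt (fun t => -exp (-t ^ 2) / 2) (x * exp (-x ^ 2)) x := by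
    refine ((hasDerivAt_pow 2 x).neg.exp.neg.div_const 2).congr_deriv ?_
    simp only [Pi.neg_apply, Nat.cast_ofNat]
    ring
  have ibp := integral_mul_deriv_eq_deriv_mul_of_integrable (fun x _ => P.hasDerivAt x)
    (fun x _ => hv x)
    ((integrable_exp_neg_sq_mul_eval (X * P)).congr
      (.of_forall fun x => by simp only [eval_mul, eval_X, Pi.mul_apply]; ring))
    (((integrable_exp_neg_sq_mul_eval (derivative P)).div_const 2).neg.congr
      (.of_forall fun x => by simp only [Pi.neg_apply, Pi.mul_apply]; ring))
    (((integrable_exp_neg_sq_mul_eval P).div_const 2).neg.congr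
      (.of_forall fun x => by simp only [Pi.neg_apply, Pi.mul_apply]; ring))
  simp only [gaussIntegral_apply, eval_mul, eval_X]
  convert ibp using 1
  · congr 1 with x
    ring
  · rw [← integral_div, ← integral_neg]
    congr 1 with x
    ring

lemma gaussIntegral_hermiteP_comp {α β : ℝ} (hβ : β ≠ 0) (hαβ : α ^ 2 + β ^ 2 = 1) (c : ℝ)
    (n : ℕ) :
    gaussIntegral ((hermiteP n).comp (C α * X + C c)) = √π * β ^ n * (hermiteP n).eval (c / β) := by
  induction n using Nat.twoStepInduction with
  | zero => simp [hermiteP_zero, gaussIntegral_one]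
  | one =>
    have h : (hermiteP 1).comp (C α * X + C c) = C (2 * α) * (X * 1) + C (2 * c) * 1 := by
      simp only [hermiteP_one, mul_comp, C_comp, X_comp, map_mul]
      ring
    rw [h, map_add, gaussIntegral_C_mul, gaussIntegral_C_mul, gaussIntegral_X_mul,
      derivative_one, map_zero, gaussIntegral_one, hermiteP_one]
    simp only [eval_mul, eval_C, eval_X]
    field_simp
    ring
  | more n ih₀ ih₁ =>
    set L := C α * X + C c
    set Q := (hermiteP (n + 1)).comp L
    have h : (hermiteP (n + 2)).comp L
        = C (2 * α) * (X * Q) + C (2 * c) * Q - C (2 * (n + 1) : ℝ) * (hermiteP n).comp L := by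
      simp only [Q, L, hermiteP_add_two, sub_comp, mul_comp, C_comp, X_comp, map_mul]
      ring
    have hQ : derivative Q = C (α * (2 * (n + 1))) * (hermiteP n).comp L := by
      simp only [Q, L, derivative_comp, derivative_hermiteP_succ, mul_comp, C_comp,
        derivative_add, derivative_C_mul_X, derivative_C, add_zero, map_mul]
      ring
    rw [h, map_sub, map_add, gaussIntegral_C_mul, gaussIntegral_C_mul, gaussIntegral_C_mul,
      gaussIntegral_X_mul, hQ, gaussIntegral_C_mul, ih₀, ih₁, hermiteP_add_two]
    simp only [eval_sub, eval_mul, eval_C, eval_X]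
    have hα : α ^ 2 = 1 - β ^ 2 := by linarith
    field_simp
    rw [hα]
    ring

lemma integral_comp_mul_sub {E : Type*} [NormedAddCommGroup E] [NormedSpace ℝ E]
    (f : ℝ → E) (a b : ℝ) : ∫ x, f (a * x - b) = |a⁻¹| • ∫ x, f x := by
  rw [Measure.integral_comp_mul_left (fun x => f (x - b)), integral_sub_right_eq_self]

lemma exp_mehler_mul_exp (p q z z' : ℝ) :
    exp (-(p ^ 2 + q ^ 2) * (z ^ 2 + z' ^ 2) / 4 + p * q * z * z') *
        exp (-(q ^ 2 - p ^ 2) * z' ^ 2 / 4) =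
      exp (-(q ^ 2 - p ^ 2) * z ^ 2 / 4) * exp (-(q / √2 * z' - p * z / √2) ^ 2) := by
  have h2 : √2 ^ 2 = 2 := sq_sqrt zero_le_two
  rw [← exp_add, ← exp_add]
  congr 1
  field_simp
  rw [h2]
  ring

theorem stmt5_general (p q : ℝ) (hp : 0 < p) (hpq : p < q)
    (τ : ℝ) (hτ : τ = p / q) (i : ℕ) (z : ℝ) :
    ∫ z' : ℝ,
        (1 / Real.sqrt (2 * Real.pi)) *
          Real.exp (-(p ^ 2 + q ^ 2) * (z ^ 2 + z' ^ 2) / 4 + p * q * z * z') *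
          (Real.exp (-(q ^ 2 - p ^ 2) * z' ^ 2 / 4) *
            (hermiteP i).eval (Real.sqrt ((q ^ 2 - p ^ 2) / 2) * z')) =
      (τ ^ i / q) *
        (Real.exp (-(q ^ 2 - p ^ 2) * z ^ 2 / 4) *
          (hermiteP i).eval (Real.sqrt ((q ^ 2 - p ^ 2) / 2) * z)) := by
  have hq : 0 < q := hp.trans hpq
  have hqp : 0 < q ^ 2 - p ^ 2 := by nlinarith
  set s := √((q ^ 2 - p ^ 2) / 2)
  set E := exp (-(q ^ 2 - p ^ 2) * z ^ 2 / 4)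
  set α := s / (q / √2)
  have hα : α * (q / √2) = s := div_mul_cancel₀ s (by positivity)
  have hαβ : α ^ 2 + (p / q) ^ 2 = 1 := by
    have h2 : √2 ^ 2 = 2 := sq_sqrt zero_le_two
    simp only [α, s, div_pow, sq_sqrt (half_pos hqp).le, h2]
    field_simp
    ring
  set f : ℝ → ℝ := fun u => exp (-u ^ 2) *
    ((hermiteP i).comp (C α * X + C (α * (p * z / √2)))).eval u
  have hf : ∫ u, f u = √π * (p / q) ^ i * (hermiteP i).eval (s * z) := by
    rw [show s * z = α * (p * z / √2) / (p / q) by rw [← hα]; field_simp]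
    exact gaussIntegral_hermiteP_comp (by positivity) hαβ _ i
  have hintegrand (z' : ℝ) :
      1 / √(2 * π) * exp (-(p ^ 2 + q ^ 2) * (z ^ 2 + z' ^ 2) / 4 + p * q * z * z') *
          (exp (-(q ^ 2 - p ^ 2) * z' ^ 2 / 4) * (hermiteP i).eval (s * z')) =
        1 / √(2 * π) * E * f (q / √2 * z' - p * z / √2) := by
    have hsz : s * z' = α * (q / √2 * z' - p * z / √2) + α * (p * z / √2) := by
      rw [← hα]; ring
    rw [mul_assoc _ (exp _), ← mul_assoc (exp _), exp_mehler_mul_exp, hsz]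
    simp only [f, eval_comp, eval_add, eval_mul, eval_C, eval_X]
    ring
  rw [integral_congr_ae (.of_forall hintegrand), integral_const_mul, integral_comp_mul_sub f,
    smul_eq_mul, hf, hτ, sqrt_mul zero_le_two, abs_of_pos (by positivity)]
  field_simp

theorem stmt5 (p q : ℝ) (hp : 0 < p) (hpq : p < q) (hsum : p + q = 1)
    (τ : ℝ) (hτ : τ = p / q) (i : ℕ) (z : ℝ) :
    ∫ z' : ℝ,
        (1 / Real.sqrt (2 * Real.pi)) *
          Real.exp (-(p ^ 2 + q ^ 2) * (z ^ 2 + z' ^ 2) / 4 + p * q * z * z') *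
          (Real.exp (-(q ^ 2 - p ^ 2) * z' ^ 2 / 4) *
            (hermiteP i).eval (Real.sqrt ((q ^ 2 - p ^ 2) / 2) * z')) =
      (τ ^ i / q) *
        (Real.exp (-(q ^ 2 - p ^ 2) * z ^ 2 / 4) *
          (hermiteP i).eval (Real.sqrt ((q ^ 2 - p ^ 2) / 2) * z)) :=
  stmt5_general p q hp hpq τ hτ i z
end

section
/- For τ ∈ (0,1) and m ≥ 1, the sum of residues identity ∑_{i=0}^{m-1} 1/∏_{j≤m-1, j≠i}(1 - τ^{j-i}) = 1 holds; equivalently, the partial fraction decomposition of 1/(λ;τ)_m = ∑_{i=0}^{m-1} c_i/(1 - λτ^i) has coefficients c_i summing to 1, with c_i = 1/∏_{j≠i}(1 - τ^{j-i}). -/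
open Finset

theorem stmt16 (τ : ℝ) (hτ0 : 0 < τ) (hτ1 : τ < 1) (m : ℕ) (hm : 1 ≤ m) :
    ∑ i ∈ Finset.range m,
        (∏ j ∈ (Finset.range m).erase i, (1 - τ ^ ((j : ℤ) - (i : ℤ))))⁻¹ = 1 := by
  have hτne : τ ≠ 0 := ne_of_gt hτ0
  set v : ℕ → ℝ := fun i => τ ^ (-(i : ℤ)) with hv
  have hinj : Set.InjOn v (Finset.range m) := by
    intro a _ b _ h
    have := zpow_right_injective₀ hτ0 (ne_of_lt hτ1) h
    omega
  have hdeg : (1 : Polynomial ℝ).degree < #(Finset.range m) := by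
    rw [Polynomial.degree_one, Finset.card_range]
    exact_mod_cast Nat.pos_of_ne_zero (by omega)
  have key := Lagrange.eq_interpolate hinj hdeg
  have key0 := congrArg (Polynomial.eval 0) key
  simp only [Polynomial.eval_one, Lagrange.interpolate_apply, Polynomial.eval_finset_sum,
    Polynomial.eval_mul, Polynomial.eval_C, Lagrange.basis, Polynomial.eval_prod,
    one_mul] at key0
  refine Eq.trans (Finset.sum_congr rfl fun i hi => ?_) key0.symm
  rw [← Finset.prod_inv_distrib]
  refine Finset.prod_congr rfl fun j hj => ?_
  have hji : j ≠ i := (Finset.mem_erase.mp hj).1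
  have hne : (1 : ℝ) - τ ^ ((j : ℤ) - (i : ℤ)) ≠ 0 := by
    have : τ ^ ((j : ℤ) - (i : ℤ)) ≠ 1 := by
      intro h
      have := zpow_right_injective₀ hτ0 (ne_of_lt hτ1) (a₁ := (j : ℤ) - i) (a₂ := 0)
        (by simpa using h)
      omega
    intro h; exact this (by linarith)
  have hzne : τ ^ (-(j : ℤ)) ≠ 0 := zpow_ne_zero _ hτne
  rw [Lagrange.basisDivisor]
  simp only [Polynomial.eval_mul, Polynomial.eval_C, Polynomial.eval_sub, Polynomial.eval_X]
  have hfact : v i - v j = τ ^ (-(j : ℤ)) * (τ ^ ((j : ℤ) - (i : ℤ)) - 1) := by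
    simp only [hv, mul_sub, mul_one, ← zpow_add₀ hτne]
    ring_nf
  rw [hfact, mul_inv, zero_sub, ← neg_sub (τ ^ ((j : ℤ) - (i : ℤ))) 1, inv_neg]
  have hc : (τ ^ (-(j : ℤ)))⁻¹ * (τ ^ ((j : ℤ) - (i : ℤ)) - 1)⁻¹ * -(v j) =
      -((τ ^ (-(j : ℤ)))⁻¹ * τ ^ (-(j : ℤ)) * (τ ^ ((j : ℤ) - (i : ℤ)) - 1)⁻¹) := by
    rw [hv]; ring
  rw [hc, inv_mul_cancel₀ hzne, one_mul]
end
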